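/- For all b > 0 and all x ∈ [0,1] one has the inequality φ(x,b) ≤ 1/3, where φ(x,b) := ((b+x)/(4(2b+1)²))·( 4(b+1)⁴·log(b+1) − 4b⁴·log b − (2b+1)·( 3 + 6b + 6b² − 4(b+x)² ) ) − ((2b²+2b+1)/(2b+1))·(b+x)·log(b+x). -/

import Mathlib

/-- The function `φ(x,b) = (b+x)·Φ(b, b+x)`, where `Φ` is the sharp constant in the
weighted Poincaré inequality on `[b, b+1]`. -/
noncomputable def phi (x b : ℝ) : ℝ :=
  ((b + x) / (4 * (2 * b + 1) ^ 2)) *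
    (4 * (b + 1) ^ 4 * Real.log (b + 1) - 4 * b ^ 4 * Real.log b
      - (2 * b + 1) * (3 + 6 * b + 6 * b ^ 2 - 4 * (b + x) ^ 2))
  - ((2 * b ^ 2 + 2 * b + 1) / (2 * b + 1)) * (b + x) * Real.log (b + x)

/-!
For fixed `b`, the maximum of `φ(·, b)` on `[0, 1]` is attained at an endpoint or at an interior
critical point. At the endpoints the bound follows from the Padé estimate
`log (1 + 1/b) ≤ (30b² + 21b + 1) / (3b (10b² + 12b + 3))`. At a critical point `x`, the equation
`∂φ/∂x = 0` eliminates `log (b + x)` and gives `(2b+1) φ = (2b²+2b+1) c - 2c³` with `c = b + x`,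
which is at most `(2b+1)/3` unless `c ∈ [max b (1/3), b + 1/2]`. On that interval `∂φ/∂x` is a
convex function of `c` which, by further Padé estimates, is negative at both endpoints, so it has
no zero there.
-/

open Real Set

/-- The right-hand side is the `[3/2]` Padé approximant of `log (1 + h/a)`; the difference has
derivative `h⁵ / (a (a + h) (10a² + 12ah + 3h²)²)` in `h`. -/
theorem log_add_sub_log_le {a h : ℝ} (ha : 0 < a) (hh : 0 ≤ h) :
    log (a + h) - log a ≤
      h * (30 * a ^ 2 + 21 * a * h + h ^ 2) / (3 * a * (10 * a ^ 2 + 12 * a * h + 3 * h ^ 2)) := by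
  set f : ℝ → ℝ := fun s =>
    s * (30 * a ^ 2 + 21 * a * s + s ^ 2) / (3 * a * (10 * a ^ 2 + 12 * a * s + 3 * s ^ 2))
      - log (a + s)
  have hf' : ∀ s, 0 ≤ s →
      HasDerivAt f (s ^ 5 / (a * (a + s) * (10 * a ^ 2 + 12 * a * s + 3 * s ^ 2) ^ 2)) s := by
    intro s hs
    have hQ : 0 < 10 * a ^ 2 + 12 * a * s + 3 * s ^ 2 := by positivity
    have has : 0 < a + s := by positivity
    have hx := hasDerivAt_id' s
    have hnum := hx.mul (((hx.const_mul (21 * a)).const_add (30 * a ^ 2)).add (hx.pow 2))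
    have hden := (((hx.const_mul (12 * a)).const_add (10 * a ^ 2)).add
      ((hx.pow 2).const_mul 3)).const_mul (3 * a)
    refine ((hnum.div hden (by positivity)).sub ((hx.const_add a).log has.ne')).congr_deriv ?_
    simp only [Pi.add_apply, Pi.mul_apply, Pi.pow_apply]
    field_simp
    ring
  have hmono : MonotoneOn f (Ici 0) :=
    monotoneOn_of_hasDerivWithinAt_nonneg (convex_Ici 0)
      (fun s hs => (hf' s hs).continuousAt.continuousWithinAt)
      (fun s hs => (hf' s (interior_subset hs)).hasDerivWithinAt)
      (fun s hs => by have := interior_subset hs; simp only [mem_Ici] at this; positivity)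
  have := hmono self_mem_Ici hh hh
  simp only [f, add_zero, zero_mul, zero_div, zero_sub] at this
  linarith

theorem log_add_one_sub_log_le {b : ℝ} (hb : 0 < b) :
    log (b + 1) - log b ≤ (30 * b ^ 2 + 21 * b + 1) / (3 * b * (10 * b ^ 2 + 12 * b + 3)) :=
  (log_add_sub_log_le hb zero_le_one).trans_eq (by ring)

theorem phi_zero_le {b : ℝ} (hb : 0 < b) : phi 0 b ≤ 1 / 3 := by
  calc phi 0 b = b * (b + 1) ^ 4 / (2 * b + 1) ^ 2 * (log (b + 1) - log b)
        - b * (2 * b ^ 2 + 6 * b + 3) / (4 * (2 * b + 1)) := by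
        unfold phi; rw [add_zero]; field_simp; ring
    _ ≤ b * (b + 1) ^ 4 / (2 * b + 1) ^ 2 *
          ((30 * b ^ 2 + 21 * b + 1) / (3 * b * (10 * b ^ 2 + 12 * b + 3)))
        - b * (2 * b ^ 2 + 6 * b + 3) / (4 * (2 * b + 1)) := by
        gcongr; exact log_add_one_sub_log_le hb
    _ ≤ 1 / 3 := by
        field_simp
        nlinarith [pow_pos hb 2, pow_pos hb 3, pow_pos hb 4, pow_pos hb 5, pow_pos hb 6]

theorem phi_one_le {b : ℝ} (hb : 0 < b) : phi 1 b ≤ 1 / 3 := by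
  calc phi 1 b = b ^ 4 * (b + 1) / (2 * b + 1) ^ 2 * (log (b + 1) - log b)
        - (b + 1) * (2 * b ^ 2 - 2 * b - 1) / (4 * (2 * b + 1)) := by
        unfold phi; field_simp; ring
    _ ≤ b ^ 4 * (b + 1) / (2 * b + 1) ^ 2 *
          ((30 * b ^ 2 + 21 * b + 1) / (3 * b * (10 * b ^ 2 + 12 * b + 3)))
        - (b + 1) * (2 * b ^ 2 - 2 * b - 1) / (4 * (2 * b + 1)) := by
        gcongr; exact log_add_one_sub_log_le hb
    _ ≤ 1 / 3 := by
        field_simp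
        nlinarith [pow_pos hb 2, pow_pos hb 3, pow_pos hb 4, pow_pos hb 5, pow_pos hb 6]

/-- `4 (2b+1)² · ∂φ/∂x (x, b)`, as a function of `c = b + x`. -/
noncomputable def phiDerivNum (b c : ℝ) : ℝ :=
  4 * (b + 1) ^ 4 * log (b + 1) - 4 * b ^ 4 * log b - (2 * b + 1) * (3 + 6 * b + 6 * b ^ 2)
    + 12 * (2 * b + 1) * c ^ 2 - 4 * (2 * b + 1) * (2 * b ^ 2 + 2 * b + 1) * (log c + 1)

theorem hasDerivAt_phi {b x : ℝ} (hb : 2 * b + 1 ≠ 0) (hbx : b + x ≠ 0) :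
    HasDerivAt (fun y => phi y b) (phiDerivNum b (b + x) / (4 * (2 * b + 1) ^ 2)) x := by
  have hc := (hasDerivAt_id' x).const_add b
  have := ((hc.div_const (4 * (2 * b + 1) ^ 2)).mul
    ((((hc.pow 2).const_mul 4).const_sub (3 + 6 * b + 6 * b ^ 2)).const_mul (2 * b + 1)
      |>.const_sub (4 * (b + 1) ^ 4 * log (b + 1) - 4 * b ^ 4 * log b))).sub
    ((hc.const_mul ((2 * b ^ 2 + 2 * b + 1) / (2 * b + 1))).mul (hc.log hbx))
  refine this.congr_deriv ?_
  simp only [Pi.pow_apply, phiDerivNum]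
  field_simp
  ring

theorem convexOn_phiDerivNum {b : ℝ} (hb : 0 ≤ b) : ConvexOn ℝ (Ioi 0) (phiDerivNum b) := by
  have hsq : ConvexOn ℝ (Ioi 0) (fun c : ℝ => c ^ 2) :=
    (convexOn_pow 2).subset Ioi_subset_Ici_self (convex_Ioi 0)
  have hlog : ConvexOn ℝ (Ioi 0) (fun c => -log c) := strictConcaveOn_log_Ioi.concaveOn.neg
  refine (((hsq.smul (by positivity : (0 : ℝ) ≤ 12 * (2 * b + 1))).add
    (hlog.smul (by positivity : (0 : ℝ) ≤ 4 * (2 * b + 1) * (2 * b ^ 2 + 2 * b + 1)))).add_const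
    (4 * (b + 1) ^ 4 * log (b + 1) - 4 * b ^ 4 * log b - (2 * b + 1) * (3 + 6 * b + 6 * b ^ 2)
      - 4 * (2 * b + 1) * (2 * b ^ 2 + 2 * b + 1))).congr fun c _ => ?_
  simp only [Pi.add_apply, smul_eq_mul, phiDerivNum]
  ring

theorem phiDerivNum_neg_of_mem_Icc {b α β c : ℝ} (hb : 0 ≤ b) (hα : 0 < α) (hc : c ∈ Icc α β)
    (hα' : phiDerivNum b α < 0) (hβ' : phiDerivNum b β < 0) : phiDerivNum b c < 0 :=
  ((convexOn_phiDerivNum hb).le_max_of_mem_Icc hα (hα.trans_le (hc.1.trans hc.2)) hc).trans_lt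
    (max_lt hα' hβ')

theorem phiDerivNum_self_neg {b : ℝ} (hb : 1 / 3 ≤ b) : phiDerivNum b b < 0 := by
  have hb0 : 0 < b := by linarith
  calc phiDerivNum b b
        = 4 * (b + 1) ^ 4 * (log (b + 1) - log b) - (2 * b + 1) * (2 * b ^ 2 + 14 * b + 7) := by
        unfold phiDerivNum; ring
    _ ≤ 4 * (b + 1) ^ 4 * ((30 * b ^ 2 + 21 * b + 1) / (3 * b * (10 * b ^ 2 + 12 * b + 3)))
        - (2 * b + 1) * (2 * b ^ 2 + 14 * b + 7) := by
        gcongr; exact log_add_one_sub_log_le hb0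
    _ < 0 := by
        have h := sub_nonneg.2 hb
        field_simp
        nlinarith [mul_nonneg h h, pow_nonneg h 3, pow_nonneg h 4, pow_nonneg h 5]

theorem phiDerivNum_add_half_neg {b : ℝ} (hb : 0 < b) : phiDerivNum b (b + 1 / 2) < 0 := by
  calc phiDerivNum b (b + 1 / 2)
        = 4 * (b + 1) ^ 4 * (log (b + 1 / 2 + 1 / 2) - log (b + 1 / 2))
          + 4 * b ^ 4 * (log (b + 1 / 2) - log b) - 2 * (2 * b + 1) * (b ^ 2 + b + 2) := by
        unfold phiDerivNum; rw [show b + 1 / 2 + 1 / 2 = b + 1 by ring]; ring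
    _ ≤ 4 * (b + 1) ^ 4 * ((30 * (2 * b + 1) ^ 2 + 21 * (2 * b + 1) + 1)
            / (3 * (2 * b + 1) * (10 * (2 * b + 1) ^ 2 + 12 * (2 * b + 1) + 3)))
          + 4 * b ^ 4 * ((30 * (2 * b) ^ 2 + 21 * (2 * b) + 1)
            / (3 * (2 * b) * (10 * (2 * b) ^ 2 + 12 * (2 * b) + 3)))
          - 2 * (2 * b + 1) * (b ^ 2 + b + 2) := by
        gcongr
        · exact (log_add_sub_log_le (by positivity) (by norm_num)).trans_eq (by field_simp)
        · exact (log_add_sub_log_le hb (by norm_num)).trans_eq (by field_simp)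
    _ < 0 := by
        field_simp
        nlinarith [pow_pos hb 2, pow_pos hb 3, pow_pos hb 4, pow_pos hb 5, pow_pos hb 6,
          pow_pos hb 7, pow_pos hb 8, pow_pos hb 9]

theorem phiDerivNum_one_third_neg {b : ℝ} (hb : 0 < b) (hb3 : b ≤ 1 / 3) :
    phiDerivNum b (1 / 3) < 0 := by
  calc phiDerivNum b (1 / 3)
        = 4 * (b + 1) ^ 4 * (log (1 + b) - log 1) + 4 * b ^ 4 * (log (b + (1 / 3 - b)) - log b)
          + 4 * (b ^ 4 + (2 * b + 1) * (2 * b ^ 2 + 2 * b + 1)) * (log (1 + 2) - log 1)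
          - (2 * b + 1) * (3 + 6 * b + 6 * b ^ 2) + 12 * (2 * b + 1) / 9
          - 4 * (2 * b + 1) * (2 * b ^ 2 + 2 * b + 1) := by
        rw [add_sub_cancel, log_one, add_comm 1 b, show (1 : ℝ) + 2 = 3 by norm_num, one_div,
          log_inv]
        unfold phiDerivNum
        rw [log_inv]
        ring
    _ ≤ 4 * (b + 1) ^ 4 * (b * (30 + 21 * b + b ^ 2) / (3 * (10 + 12 * b + 3 * b ^ 2)))
          + 4 * b ^ 4 * ((1 - 3 * b) * (90 * b ^ 2 + 57 * b + 1) / (27 * b * (3 * b ^ 2 + 6 * b + 1)))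
          + 4 * (b ^ 4 + (2 * b + 1) * (2 * b ^ 2 + 2 * b + 1)) * (76 / 69)
          - (2 * b + 1) * (3 + 6 * b + 6 * b ^ 2) + 12 * (2 * b + 1) / 9
          - 4 * (2 * b + 1) * (2 * b ^ 2 + 2 * b + 1) := by
        gcongr
        · exact (log_add_sub_log_le one_pos hb.le).trans_eq (by ring)
        · refine (log_add_sub_log_le hb (by linarith)).trans_eq ?_
          rw [show 10 * b ^ 2 + 12 * b * (1 / 3 - b) + 3 * (1 / 3 - b) ^ 2
            = (3 * b ^ 2 + 6 * b + 1) / 3 by ring]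
          field_simp
          ring
        · exact (log_add_sub_log_le one_pos (by norm_num)).trans_eq (by norm_num)
    _ < 0 := by
        have h := sub_nonneg.2 hb3
        field_simp
        -- certificate in the Bernstein basis `bⁱ (1/3 - b)ʲ` of `[0, 1/3]`
        nlinarith [mul_pos hb (add_pos_of_nonneg_of_pos (pow_nonneg h 9) (pow_pos hb 9)),
          mul_nonneg hb.le (pow_nonneg h 9), mul_nonneg (pow_nonneg hb.le 2) (pow_nonneg h 8),
          mul_nonneg (pow_nonneg hb.le 3) (pow_nonneg h 7),
          mul_nonneg (pow_nonneg hb.le 4) (pow_nonneg h 6),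
          mul_nonneg (pow_nonneg hb.le 5) (pow_nonneg h 5),
          mul_nonneg (pow_nonneg hb.le 6) (pow_nonneg h 4),
          mul_nonneg (pow_nonneg hb.le 7) (pow_nonneg h 3),
          mul_nonneg (pow_nonneg hb.le 8) (pow_nonneg h 2),
          mul_nonneg (pow_nonneg hb.le 9) h, pow_pos hb 10]

theorem mul_phi_eq_of_phiDerivNum_eq_zero {b x : ℝ} (hb : 2 * b + 1 ≠ 0)
    (h : phiDerivNum b (b + x) = 0) :
    (2 * b + 1) * phi x b = (2 * b ^ 2 + 2 * b + 1) * (b + x) - 2 * (b + x) ^ 3 := by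
  unfold phiDerivNum at h
  unfold phi
  field_simp
  linear_combination (b + x) * h

theorem cubic_le_of_phiDerivNum_eq_zero {b c : ℝ} (hb : 0 < b) (hc : b ≤ c)
    (h : phiDerivNum b c = 0) : (2 * b ^ 2 + 2 * b + 1) * c - 2 * c ^ 3 ≤ (2 * b + 1) / 3 := by
  by_contra! hgt
  have hc_lt : c < b + 1 / 2 := by
    by_contra! hc'
    nlinarith [mul_nonneg (by linarith : (0 : ℝ) ≤ c - (b + 1 / 2))
      (by nlinarith : (0 : ℝ) ≤ 2 * c ^ 2 + (2 * b + 1) * c - 1 / 2)]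
  rcases le_or_gt b (1 / 3) with hb3 | hb3
  · have hc_ge : 1 / 3 ≤ c := by
      by_contra! hc'
      nlinarith [mul_nonneg (by linarith : (0 : ℝ) ≤ 1 / 3 - c)
          (by nlinarith : (0 : ℝ) ≤ 2 * b ^ 2 + 2 * b + 1 - 2 * c ^ 2 - 2 * c / 3 - 2 / 9),
        mul_nonneg (by linarith : (0 : ℝ) ≤ 1 / 3 - b) (by linarith : (0 : ℝ) ≤ 1 / 3 + b)]
    exact (phiDerivNum_neg_of_mem_Icc hb.le (by norm_num) ⟨hc_ge, hc_lt.le⟩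
      (phiDerivNum_one_third_neg hb hb3) (phiDerivNum_add_half_neg hb)).ne h
  · exact (phiDerivNum_neg_of_mem_Icc hb.le hb ⟨hc, hc_lt.le⟩
      (phiDerivNum_self_neg hb3.le) (phiDerivNum_add_half_neg hb)).ne h

theorem phi_le_one_third (b x : ℝ) (hb : 0 < b) (hx : x ∈ Set.Icc (0 : ℝ) 1) :
    phi x b ≤ 1 / 3 := by
  have hderiv : ∀ y ∈ Icc (0 : ℝ) 1, HasDerivAt (fun y => phi y b)
      (phiDerivNum b (b + y) / (4 * (2 * b + 1) ^ 2)) y :=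
    fun y hy => hasDerivAt_phi (by positivity) (add_pos_of_pos_of_nonneg hb hy.1).ne'
  obtain ⟨x₀, hx₀, hmax⟩ := isCompact_Icc.exists_isMaxOn (nonempty_Icc.2 zero_le_one)
    fun y hy => (hderiv y hy).continuousAt.continuousWithinAt
  refine (hmax hx).trans ?_
  rcases hx₀.1.eq_or_lt with rfl | h0
  · exact phi_zero_le hb
  rcases hx₀.2.eq_or_lt with rfl | h1
  · exact phi_one_le hb
  have hcrit : phiDerivNum b (b + x₀) = 0 := by
    simpa [(by positivity : (2 * b + 1) ≠ 0)] using
      (hmax.isLocalMax (Icc_mem_nhds h0 h1)).hasDerivAt_eq_zero (hderiv x₀ hx₀)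
  have hcubic := cubic_le_of_phiDerivNum_eq_zero hb (by linarith) hcrit
  refine le_of_mul_le_mul_left ?_ (by positivity : (0 : ℝ) < 2 * b + 1)
  rw [mul_phi_eq_of_phiDerivNum_eq_zero (by positivity) hcrit]
  linarith
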